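/- arXiv:1204.2385 — 3 statements merged into one kernel-verified Lean document; each statement's English description precedes it below -/
import Mathlib

section
/- For any matrices R₁, R₂, R₃ ∈ SO(3), the inequality (1/2)·tr(R₁ᵀR₂ − R₁ᵀR₃R₂ᵀR₃) ≥ φ(R₁ᵀR₃) − φ(R₁ᵀR₂) + λ_min(sym(R₁ᵀR₃))·φ(R₃ᵀR₂) holds, where φ(R) := tr(I₃ − R), sym(M) := (M + Mᵀ)/2, and λ_min(M) is the smallest eigenvalue of M. -/
/-!
Put `A = R₁ᵀR₃` and `B = R₃ᵀR₂`, so that `R₁ᵀR₂ = AB`, `R₁ᵀR₃R₂ᵀR₃ = ABᵀ` and `B` is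
orthogonal. The inequality then says exactly `tr ((sym A - λ_min(sym A) I) (I - sym B)) ≥ 0`.
Both factors are positive semidefinite, the second because `I - sym B = ½ (I - B)ᵀ (I - B)`,
and the trace of a product of positive semidefinite matrices is nonnegative.
-/

open Matrix BigOperators

def IsSO3 (R : Matrix (Fin 3) (Fin 3) ℝ) : Prop :=
  Rᵀ * R = 1 ∧ R * Rᵀ = 1 ∧ R.det = 1

noncomputable def phi (R : Matrix (Fin 3) (Fin 3) ℝ) : ℝ :=
  Matrix.trace ((1 : Matrix (Fin 3) (Fin 3) ℝ) - R)

noncomputable def frobSq (M : Matrix (Fin 3) (Fin 3) ℝ) : ℝ := Matrix.trace (Mᵀ * M)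

def hat (a : Fin 3 → ℝ) : Matrix (Fin 3) (Fin 3) ℝ :=
  !![0, -a 2, a 1; a 2, 0, -a 0; -a 1, a 0, 0]

def vee (M : Matrix (Fin 3) (Fin 3) ℝ) : Fin 3 → ℝ := ![M 2 1, M 0 2, M 1 0]

noncomputable def skw (M : Matrix (Fin 3) (Fin 3) ℝ) : Matrix (Fin 3) (Fin 3) ℝ :=
  (1/2 : ℝ) • (M - Mᵀ)

noncomputable def eR (M : Matrix (Fin 3) (Fin 3) ℝ) : Fin 3 → ℝ := vee (skw M)

noncomputable def symPart (M : Matrix (Fin 3) (Fin 3) ℝ) : Matrix (Fin 3) (Fin 3) ℝ :=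
  (1/2 : ℝ) • (M + Mᵀ)

noncomputable def lambdaMin (M : Matrix (Fin 3) (Fin 3) ℝ) : ℝ :=
  sInf {μ : ℝ | ∃ v : Fin 3 → ℝ, v ≠ 0 ∧ M.mulVec v = μ • v}

lemma Matrix.setOf_exists_mulVec_eq_smul_eq_spectrum {K n : Type*} [Field K] [Fintype n]
    [DecidableEq n] (A : Matrix n n K) :
    {μ : K | ∃ v : n → K, v ≠ 0 ∧ A *ᵥ v = μ • v} = spectrum K A := by
  ext μ
  rw [Set.mem_ofPred_eq, ← spectrum_toLin', ← Module.End.hasEigenvalue_iff_mem_spectrum,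
    Module.End.hasEigenvalue_iff, Submodule.ne_bot_iff]
  simp only [Module.End.mem_eigenspace_iff, toLin'_apply]
  grind

lemma lambdaMin_eq_sInf_spectrum (M : Matrix (Fin 3) (Fin 3) ℝ) :
    lambdaMin M = sInf (spectrum ℝ M) := by
  rw [lambdaMin, setOf_exists_mulVec_eq_smul_eq_spectrum]

open scoped MatrixOrder ComplexOrder in
lemma Matrix.IsHermitian.posSemidef_sub_sInf_spectrum_smul_one {𝕜 n : Type*} [RCLike 𝕜]
    [Fintype n] [DecidableEq n] {S : Matrix n n 𝕜} (hS : S.IsHermitian) :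
    (S - sInf (spectrum ℝ S) • 1).PosSemidef := by
  rw [← Matrix.le_iff, ← Algebra.algebraMap_eq_smul_one,
    algebraMap_le_iff_le_spectrum hS.isSelfAdjoint]
  exact fun x hx => csInf_le S.finite_real_spectrum.bddBelow hx

lemma Matrix.PosSemidef.trace_mul_nonneg {n : Type*} [Fintype n] {S P : Matrix n n ℝ}
    (hS : S.PosSemidef) (hP : P.PosSemidef) : 0 ≤ (S * P).trace := by
  -- Schur product theorem: as `P` is symmetric, `tr (S P)` is the sum of the entries of `S ⊙ P`.
  have h := (hS.hadamard hP).dotProduct_mulVec_nonneg (fun _ => 1)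
  have hsum : (S * P).trace = star (fun _ => 1) ⬝ᵥ (S ⊙ P) *ᵥ (fun _ => 1 : n → ℝ) := by
    simp only [trace, diag_apply, mul_apply, star_trivial, dotProduct, mulVec, hadamard_apply,
      mul_one, one_mul]
    refine Finset.sum_congr rfl fun i _ => Finset.sum_congr rfl fun j _ => ?_
    rw [← hP.isHermitian.apply i j, star_trivial]
  rwa [hsum]

lemma posSemidef_one_sub_symPart {B : Matrix (Fin 3) (Fin 3) ℝ} (hB : Bᵀ * B = 1) :
    (1 - symPart B).PosSemidef := by
  have h : 1 - symPart B = (1 / 2 : ℝ) • ((1 - B)ᴴ * (1 - B)) := by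
    simp only [conjTranspose_eq_transpose_of_trivial, transpose_sub, transpose_one, sub_mul,
      mul_sub, hB, symPart, mul_one, one_mul]
    module
  rw [h]
  exact (posSemidef_conjTranspose_mul_self _).smul (by norm_num)

lemma symPart_isHermitian (M : Matrix (Fin 3) (Fin 3) ℝ) : (symPart M).IsHermitian := by
  rw [IsHermitian, conjTranspose_eq_transpose_of_trivial, symPart, transpose_smul, transpose_add,
    transpose_transpose, add_comm]

lemma posSemidef_symPart_sub_lambdaMin_smul_one (M : Matrix (Fin 3) (Fin 3) ℝ) :
    (symPart M - lambdaMin (symPart M) • 1).PosSemidef := by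
  rw [lambdaMin_eq_sInf_spectrum]
  exact (symPart_isHermitian M).posSemidef_sub_sInf_spectrum_smul_one

lemma phi_eq_three_sub_trace (R : Matrix (Fin 3) (Fin 3) ℝ) : phi R = 3 - R.trace := by
  rw [phi, trace_sub, trace_one, Fintype.card_fin, Nat.cast_ofNat]

lemma trace_symPart (M : Matrix (Fin 3) (Fin 3) ℝ) : (symPart M).trace = M.trace := by
  rw [symPart, trace_smul, trace_add, trace_transpose, smul_eq_mul]
  ring

lemma trace_symPart_mul_symPart (A B : Matrix (Fin 3) (Fin 3) ℝ) :
    (symPart A * symPart B).trace = ((A * B).trace + (A * Bᵀ).trace) / 2 := by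
  have hAtBt : (Aᵀ * Bᵀ).trace = (A * B).trace := by
    rw [← transpose_mul, trace_transpose, trace_mul_comm]
  have hAtB : (Aᵀ * B).trace = (A * Bᵀ).trace := by
    rw [← trace_transpose, transpose_mul, transpose_transpose, trace_mul_comm]
  simp only [symPart, smul_mul_smul_comm, trace_smul, add_mul, mul_add, trace_add, hAtBt, hAtB,
    smul_eq_mul]
  ring

lemma lambdaMin_symPart_mul_phi_le (A : Matrix (Fin 3) (Fin 3) ℝ) {B : Matrix (Fin 3) (Fin 3) ℝ}
    (hB : Bᵀ * B = 1) :
    lambdaMin (symPart A) * phi B ≤ A.trace - ((A * B).trace + (A * Bᵀ).trace) / 2 := by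
  have h := (posSemidef_symPart_sub_lambdaMin_smul_one A).trace_mul_nonneg
    (posSemidef_one_sub_symPart hB)
  rw [mul_sub, sub_mul, sub_mul, trace_sub, trace_sub, trace_sub, mul_one, smul_one_mul,
    smul_mul, one_mul, trace_smul, trace_smul, trace_one, trace_symPart, trace_symPart,
    trace_symPart_mul_symPart] at h
  rw [phi_eq_three_sub_trace]
  simp only [Fintype.card_fin, smul_eq_mul] at h
  push_cast at h
  linarith

theorem key_sym_inequality_general (R₁ R₂ R₃ : Matrix (Fin 3) (Fin 3) ℝ)
    (h2 : IsSO3 R₂) (h3 : IsSO3 R₃) :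
    (1/2 : ℝ) * Matrix.trace (R₁ᵀ * R₂ - R₁ᵀ * R₃ * R₂ᵀ * R₃) ≥
      phi (R₁ᵀ * R₃) - phi (R₁ᵀ * R₂) +
        lambdaMin (symPart (R₁ᵀ * R₃)) * phi (R₃ᵀ * R₂) := by
  obtain ⟨hR₂, -, -⟩ := h2
  obtain ⟨-, hR₃, -⟩ := h3
  have hAB : R₁ᵀ * R₂ = R₁ᵀ * R₃ * (R₃ᵀ * R₂) := by
    rw [mul_assoc, ← mul_assoc R₃, hR₃, one_mul]
  have hABt : R₁ᵀ * R₃ * R₂ᵀ * R₃ = R₁ᵀ * R₃ * (R₃ᵀ * R₂)ᵀ := by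
    rw [transpose_mul, transpose_transpose, ← mul_assoc]
  have hB : (R₃ᵀ * R₂)ᵀ * (R₃ᵀ * R₂) = 1 := by
    rw [transpose_mul, transpose_transpose, mul_assoc, ← mul_assoc R₃, hR₃, one_mul, hR₂]
  have h := lambdaMin_symPart_mul_phi_le (R₁ᵀ * R₃) hB
  rw [hAB, hABt, trace_sub, phi_eq_three_sub_trace, phi_eq_three_sub_trace]
  linarith

theorem key_sym_inequality (R₁ R₂ R₃ : Matrix (Fin 3) (Fin 3) ℝ)
    (h1 : IsSO3 R₁) (h2 : IsSO3 R₂) (h3 : IsSO3 R₃) :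
    (1/2 : ℝ) * Matrix.trace (R₁ᵀ * R₂ - R₁ᵀ * R₃ * R₂ᵀ * R₃) ≥
      phi (R₁ᵀ * R₃) - phi (R₁ᵀ * R₂) +
        lambdaMin (symPart (R₁ᵀ * R₃)) * phi (R₃ᵀ * R₂) :=
  key_sym_inequality_general R₁ R₂ R₃ h2 h3
end

section
/- If R : ℝ → SO(3) is differentiable with Ṙ(t) = R(t)·ω̂(t) for some ω : ℝ → ℝ³, and Q ∈ SO(3) is constant, then the derivative of φ(QᵀR(t)) := tr(I₃ − QᵀR(t)) equals 2·e_R(QᵀR(t))ᵀ·ω(t), where e_R(M) := (sk(M))^∨ with sk(M) = (M − Mᵀ)/2. -/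
open Matrix BigOperators

attribute [local instance] Matrix.normedAddCommGroup Matrix.normedSpace

theorem deriv_phi (R : ℝ → Matrix (Fin 3) (Fin 3) ℝ) (ω : ℝ → Fin 3 → ℝ)
    (Q : Matrix (Fin 3) (Fin 3) ℝ) (hQ : IsSO3 Q) (hSO : ∀ t, IsSO3 (R t))
    (hR : ∀ t, HasDerivAt R (R t * hat (ω t)) t) :
    ∀ t, HasDerivAt (fun s => Matrix.trace ((1 : Matrix (Fin 3) (Fin 3) ℝ) - Qᵀ * R s))
      (2 * ∑ i : Fin 3, eR (Qᵀ * R t) i * ω t i) t := by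
  intro t
  classical
  -- linear map M ↦ trace(1) - trace(Qᵀ M)
  let L : Matrix (Fin 3) (Fin 3) ℝ →ₗ[ℝ] ℝ :=
    { toFun := fun M => Matrix.trace (Qᵀ * M)
      map_add' := by intro x y; simp [Matrix.mul_add]
      map_smul' := by intro c x; simp [Matrix.mul_smul] }
  let L' := LinearMap.toContinuousLinearMap L
  have h1 : HasDerivAt (fun s => L' (R s)) (L' (R t * hat (ω t))) t :=
    (L'.hasFDerivAt.comp_hasDerivAt t (hR t))
  have h2 : HasDerivAt (fun s => Matrix.trace (1 : Matrix (Fin 3) (Fin 3) ℝ) - L' (R s))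
      (0 - L' (R t * hat (ω t))) t :=
    (hasDerivAt_const t _).sub h1
  have hfun : (fun s => Matrix.trace ((1 : Matrix (Fin 3) (Fin 3) ℝ) - Qᵀ * R s))
      = fun s => Matrix.trace (1 : Matrix (Fin 3) (Fin 3) ℝ) - L' (R s) := by
    funext s
    simp [L', L, Matrix.trace_sub]
  rw [hfun]
  convert h2 using 1
  have : L' (R t * hat (ω t)) = Matrix.trace ((Qᵀ * R t) * hat (ω t)) := by
    simp [L', L, Matrix.mul_assoc]
  rw [this]
  set M := Qᵀ * R t with hM
  simp only [Matrix.trace, Matrix.diag, Matrix.mul_apply, hat, eR, vee, skw,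
    Fin.sum_univ_three, Matrix.cons_val', Matrix.cons_val_zero,
    Matrix.cons_val_one, Matrix.head_cons, Matrix.empty_val', Matrix.cons_val_fin_one,
    Matrix.head_fin_const, Matrix.smul_apply, Matrix.sub_apply, Matrix.transpose_apply,
    Matrix.of_apply, smul_eq_mul, Matrix.cons_val_two, Matrix.vecTail, Matrix.vecHead, Function.comp,
    show (Fin.succ 0 : Fin 3) = 1 from rfl, show ((Fin.succ 0).succ : Fin 3) = 2 from rfl,
    show (Fin.succ 0 : Fin 2) = 1 from rfl]
  ring
end

section
/- For any R₁, R₂ ∈ SO(3) and any a ∈ (0,1), φ(R₁ᵀR₂) ≥ a·φ(R₃ᵀR₂) − (a/(1−a))·φ(R₃ᵀR₁) for every R₃ ∈ SO(3), where φ(R) := tr(I₃ − R) = (1/2)‖I₃ − R‖²_F. -/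
open Matrix BigOperators

/-!
For orthogonal `R`, `S` one has `φ(RᵀS) = ‖R - S‖² / 2` in the Frobenius norm, so the claim reads
`a ‖R₃ - R₂‖² ≤ ‖R₁ - R₂‖² + a/(1-a) ‖R₃ - R₁‖²`. This follows from the triangle inequality
`‖R₃ - R₂‖ ≤ ‖R₃ - R₁‖ + ‖R₁ - R₂‖` and the scalar inequality `a (x + y)² ≤ y² + a/(1-a) x²`,
which is `((1 - a) y - a x)² ≥ 0` divided by `1 - a`.
-/

open scoped Matrix.Norms.Frobenius

theorem mul_add_sq_le {a : ℝ} (ha : a < 1) (x y : ℝ) :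
    a * (x + y) ^ 2 ≤ y ^ 2 + a / (1 - a) * x ^ 2 := by
  have h1a : 0 < 1 - a := sub_pos.2 ha
  have key : (1 - a) * (y ^ 2 + a / (1 - a) * x ^ 2 - a * (x + y) ^ 2) =
      ((1 - a) * y - a * x) ^ 2 := by
    field_simp
    ring
  have h : 0 ≤ (1 - a) * (y ^ 2 + a / (1 - a) * x ^ 2 - a * (x + y) ^ 2) := by
    rw [key]
    positivity
  linarith [(mul_nonneg_iff_of_pos_left h1a).1 h]

theorem mul_norm_add_sq_le {E : Type*} [SeminormedAddCommGroup E] {a : ℝ} (ha₀ : 0 ≤ a)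
    (ha₁ : a < 1) (u v : E) : a * ‖u + v‖ ^ 2 ≤ ‖v‖ ^ 2 + a / (1 - a) * ‖u‖ ^ 2 :=
  calc a * ‖u + v‖ ^ 2 ≤ a * (‖u‖ + ‖v‖) ^ 2 := by gcongr; exact norm_add_le u v
    _ ≤ ‖v‖ ^ 2 + a / (1 - a) * ‖u‖ ^ 2 := mul_add_sq_le ha₁ _ _

theorem Matrix.frobenius_norm_sq_eq_trace {m n : Type*} [Fintype m] [Fintype n]
    (A : Matrix m n ℝ) : ‖A‖ ^ 2 = trace (Aᵀ * A) := by
  rw [frobenius_norm_def, ← Real.sqrt_eq_rpow, Real.sq_sqrt (by positivity), Finset.sum_comm]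
  simp [trace, mul_apply, sq]

theorem Matrix.frobenius_norm_sub_sq_of_orthogonal {n : Type*} [Fintype n] [DecidableEq n]
    {R S : Matrix n n ℝ} (hR : Rᵀ * R = 1) (hS : Sᵀ * S = 1) :
    ‖R - S‖ ^ 2 = 2 * trace (1 - Rᵀ * S) := by
  have htr : trace (Sᵀ * R) = trace (Rᵀ * S) := by
    rw [← trace_transpose, transpose_mul, transpose_transpose]
  rw [frobenius_norm_sq_eq_trace, transpose_sub, sub_mul, mul_sub, mul_sub, hR, hS]
  simp only [trace_sub, htr]
  ring

theorem phi_transpose_mul_eq {R S : Matrix (Fin 3) (Fin 3) ℝ} (hR : Rᵀ * R = 1)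
    (hS : Sᵀ * S = 1) :
    phi (Rᵀ * S) = ‖R - S‖ ^ 2 / 2 := by
  rw [frobenius_norm_sub_sq_of_orthogonal hR hS, phi]
  ring

theorem phi_young_ineq (R₁ R₂ : Matrix (Fin 3) (Fin 3) ℝ) (h1 : IsSO3 R₁) (h2 : IsSO3 R₂)
    (a : ℝ) (ha : a ∈ Set.Ioo (0:ℝ) 1) :
    ∀ R₃ : Matrix (Fin 3) (Fin 3) ℝ, IsSO3 R₃ →
      phi (R₁ᵀ * R₂) ≥ a * phi (R₃ᵀ * R₂) - (a / (1 - a)) * phi (R₃ᵀ * R₁) := by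
  intro R₃ h3
  have young := mul_norm_add_sq_le ha.1.le ha.2 (R₃ - R₁) (R₁ - R₂)
  rw [sub_add_sub_cancel] at young
  rw [phi_transpose_mul_eq h1.1 h2.1, phi_transpose_mul_eq h3.1 h2.1,
    phi_transpose_mul_eq h3.1 h1.1]
  linarith
end
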